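/- For every x in the set {1, −5, −10, −2, −8, 6, 3, 9, 4}, there are no integers a, b, c, e with a + b + c + e = 1 such that, setting t1 = 6a − 14b − c − e, the three rational numbers (1/58)(−28·t1 + 420 − 20x), (1/58)(28·t1 + 392 + 20x), (1/58)(−t1 + 363 + 20x) are all non-negative integers. -/

import Mathlib

/-!
Write `t = 6a − 14b − c − e`. If the third quantity is `k ∈ ℕ`, then `t = 363 + 20x − 58k`,
and the first two quantities become `28k − 168 − 10x` and `182 + 10x − 28k`. Their
non-negativity puts the multiple `14(k − 6)` of `14` into `[5x, 5x + 7]`, which happens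
exactly when `x mod 14 ∉ {1, 3, 4, 6, 9, 12}`; every `x` of the family has such a residue.
-/

theorem Int.eq_mul_of_cast_div_eq_natCast {A d : ℤ} {n : ℕ} (hd : d ≠ 0)
    (h : (A : ℚ) / d = n) : A = d * n := by
  rw [div_eq_iff (by exact_mod_cast hd)] at h
  exact_mod_cast h.trans (mul_comm _ _)

theorem exists_mul_fourteen_mem_Icc_of_lutharPassi {t x : ℤ}
    (h₁ : 0 ≤ -28 * t + 420 - 20 * x) (h₂ : 0 ≤ 28 * t + 392 + 20 * x)
    (h₃ : 58 ∣ -t + 363 + 20 * x) : ∃ m : ℤ, 14 * m ∈ Set.Icc (5 * x) (5 * x + 7) := by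
  obtain ⟨k, hk⟩ := h₃
  exact ⟨k - 6, by omega, by omega⟩

theorem not_exists_mul_fourteen_mem_Icc {x : ℤ}
    (hx : x % 14 ∈ ({1, 3, 4, 6, 9, 12} : Set ℤ)) :
    ¬ ∃ m : ℤ, 14 * m ∈ Set.Icc (5 * x) (5 * x + 7) := by
  rintro ⟨m, hlo, hhi⟩
  simp only [Set.mem_insert_iff, Set.mem_singleton_iff] at hx
  omega

/-- Luthar–Passi constraints excluding units of order 58 in `V(ℤRu)`, first family of
cases: for every `x` in `{1, −5, −10, −2, −8, 6, 3, 9, 4}`, there are no integers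
`a, b, c, e` with `a + b + c + e = 1` such that, with `t1 = 6a − 14b − c − e`, the
rationals `(1/58)(−28t1 + 420 − 20x)`, `(1/58)(28t1 + 392 + 20x)` and
`(1/58)(−t1 + 363 + 20x)` are all non-negative integers. -/
theorem no_order58_unit_Ru_first_family :
    ∀ x : ℤ, x ∈ ({1, -5, -10, -2, -8, 6, 3, 9, 4} : Set ℤ) →
      ¬ ∃ a b c e : ℤ, a + b + c + e = 1 ∧
        (∃ n : ℕ, ((-28 * (6 * a - 14 * b - c - e) + 420 - 20 * x : ℤ) : ℚ) / 58 = n) ∧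
        (∃ n : ℕ, ((28 * (6 * a - 14 * b - c - e) + 392 + 20 * x : ℤ) : ℚ) / 58 = n) ∧
        (∃ n : ℕ, ((-(6 * a - 14 * b - c - e) + 363 + 20 * x : ℤ) : ℚ) / 58 = n) := by
  rintro x hx ⟨a, b, c, e, -, ⟨n₁, h₁⟩, ⟨n₂, h₂⟩, ⟨n₃, h₃⟩⟩
  have e₁ := Int.eq_mul_of_cast_div_eq_natCast (d := 58) (by norm_num) (by exact_mod_cast h₁)
  have e₂ := Int.eq_mul_of_cast_div_eq_natCast (d := 58) (by norm_num) (by exact_mod_cast h₂)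
  have e₃ := Int.eq_mul_of_cast_div_eq_natCast (d := 58) (by norm_num) (by exact_mod_cast h₃)
  refine not_exists_mul_fourteen_mem_Icc ?_
    (exists_mul_fourteen_mem_Icc_of_lutharPassi (by omega) (by omega) ⟨n₃, e₃⟩)
  simp only [Set.mem_insert_iff, Set.mem_singleton_iff] at hx
  rcases hx with rfl | rfl | rfl | rfl | rfl | rfl | rfl | rfl | rfl <;> decide
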